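/- For every integer s ≥ 2 and every real z such that −1 ≤ 1 + w_1·z ≤ 1, the RKG2 stability polynomial satisfies |R_s(z)| ≤ 1; that is, the region of absolute stability of the s-stage RKG2 method contains all real z with 1 + w_1·z ∈ [−1, 1]. -/

import Mathlib

/-- The Gegenbauer polynomials with parameter 3/2:
`C_0(x) = 1`, `C_1(x) = 3x`, and
`C_j(x) = ((2j+1)/j)·x·C_{j-1}(x) − ((j+1)/j)·C_{j-2}(x)` for `j ≥ 2`. -/
noncomputable def gegenbauer : ℕ → ℝ → ℝ
  | 0, _ => 1
  | 1, x => 3 * x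
  | (j + 2), x =>
      (2 * ((j : ℝ) + 2) + 1) / ((j : ℝ) + 2) * x * gegenbauer (j + 1) x
        - (((j : ℝ) + 2) + 1) / ((j : ℝ) + 2) * gegenbauer j x

/-- The RKG2 coefficient `b_j = 4(j−1)(j+4)/(3j(j+1)(j+2)(j+3))`. -/
noncomputable def rkg2B (j : ℕ) : ℝ :=
  4 * ((j : ℝ) - 1) * ((j : ℝ) + 4) /
    (3 * (j : ℝ) * ((j : ℝ) + 1) * ((j : ℝ) + 2) * ((j : ℝ) + 3))

/-- The RKG2 coefficient `a_j = 1 − ((j+1)(j+2)/2)·b_j`. -/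
noncomputable def rkg2A (j : ℕ) : ℝ :=
  1 - ((j : ℝ) + 1) * ((j : ℝ) + 2) / 2 * rkg2B j

/-- The RKG2 parameter `w_1 = 6/((s+4)(s−1))`. -/
noncomputable def rkg2W (s : ℕ) : ℝ := 6 / (((s : ℝ) + 4) * ((s : ℝ) - 1))

/-- The RKG2 stability polynomial `R_j(z) = a_j + b_j·C_j(1 + w_1·z)` where `w_1` is built from
the stage number `s`. -/
noncomputable def rkg2R (s j : ℕ) (z : ℝ) : ℝ :=
  rkg2A j + rkg2B j * gegenbauer j (1 + rkg2W s * z)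

/-!
Put `x = cos θ`, `a = e^{iθ}`, `b = e^{-iθ}`. The generating function
`(1 - 2xt + t²)^(-3/2) = (1 - at)^(-3/2) (1 - bt)^(-3/2)` of the `C_n` gives
`C_n(x) = ∑_{i+j=n} γ_i γ_j a^i b^j` with the positive coefficients `γ_k` of `(1 - t)^(-3/2)`;
this is checked directly against the three-term recurrence. Since `|a| = |b| = 1`, the triangle
inequality yields `|C_n(x)| ≤ ∑_{i+j=n} γ_i γ_j = C_n(1) = (n+1)(n+2)/2` on `[-1, 1]`.
Finally `a_s, b_s ≥ 0` and `a_s + b_s C_s(1) = 1`, so `|R_s(z)| ≤ a_s + b_s C_s(1) = 1`.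
-/

open Finset

/-- `γ k = (3/2)_k / k!`, the coefficient of `t^k` in `(1 - t)^(-3/2)`. -/
noncomputable def gegenbauerWeight : ℕ → ℝ
  | 0 => 1
  | k + 1 => (2 * k + 3) / (2 * k + 2) * gegenbauerWeight k

local notation "γ" => gegenbauerWeight

lemma gegenbauerWeight_succ (k : ℕ) :
    γ (k + 1) = (2 * k + 3) / (2 * k + 2) * γ k := rfl

@[simp] lemma gegenbauerWeight_zero : γ 0 = 1 := rfl

lemma gegenbauerWeight_nonneg : ∀ k, 0 ≤ γ k
  | 0 => zero_le_one
  | k + 1 => by rw [gegenbauerWeight_succ]; have := gegenbauerWeight_nonneg k; positivity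

/-- The recurrence of `gegenbauerSum` on the coefficient of `a^(i+1) b^(j+1)`. -/
lemma gegenbauerWeight_succ_mul_succ (i j : ℕ) :
    ((i + j : ℝ) + 2) * (γ (i + 1) * γ (j + 1)) =
      (2 * (i + j : ℝ) + 5) / 2 * (γ i * γ (j + 1) + γ (i + 1) * γ j)
        - ((i + j : ℝ) + 3) * (γ i * γ j) := by
  rw [gegenbauerWeight_succ i, gegenbauerWeight_succ j]
  field_simp
  ring

/-- The coefficient of `t^n` in `(1 - a t)^(-3/2) (1 - b t)^(-3/2)`. -/
noncomputable def gegenbauerSum (n : ℕ) (a b : ℂ) : ℂ :=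
  ∑ p ∈ antidiagonal n, ((γ p.1 * γ p.2 : ℝ) : ℂ) * (a ^ p.1 * b ^ p.2)

section Expansion

variable (n : ℕ) (a b : ℂ)

lemma gegenbauerSum_add_two_eq_add_sum : gegenbauerSum (n + 2) a b =
    (γ (n + 2) : ℂ) * (a ^ (n + 2) + b ^ (n + 2)) +
      ∑ p ∈ antidiagonal n,
        ((γ (p.1 + 1) * γ (p.2 + 1) : ℝ) : ℂ) * (a ^ (p.1 + 1) * b ^ (p.2 + 1)) := by
  rw [gegenbauerSum, Nat.sum_antidiagonal_succ, Nat.sum_antidiagonal_succ', ← add_assoc]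
  simp
  ring

lemma mul_gegenbauerSum_succ_left : a * gegenbauerSum (n + 1) a b =
    (γ (n + 1) : ℂ) * a ^ (n + 2) +
      ∑ p ∈ antidiagonal n, ((γ p.1 * γ (p.2 + 1) : ℝ) : ℂ) * (a ^ (p.1 + 1) * b ^ (p.2 + 1)) := by
  rw [gegenbauerSum, Nat.sum_antidiagonal_succ', mul_add, mul_sum]
  congr 1
  · simp; ring
  · exact sum_congr rfl fun p _ => by ring

lemma mul_gegenbauerSum_succ_right : b * gegenbauerSum (n + 1) a b =
    (γ (n + 1) : ℂ) * b ^ (n + 2) +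
      ∑ p ∈ antidiagonal n, ((γ (p.1 + 1) * γ p.2 : ℝ) : ℂ) * (a ^ (p.1 + 1) * b ^ (p.2 + 1)) := by
  rw [gegenbauerSum, Nat.sum_antidiagonal_succ, mul_add, mul_sum]
  congr 1
  · simp; ring
  · exact sum_congr rfl fun p _ => by ring

lemma mul_mul_gegenbauerSum : a * b * gegenbauerSum n a b =
    ∑ p ∈ antidiagonal n, ((γ p.1 * γ p.2 : ℝ) : ℂ) * (a ^ (p.1 + 1) * b ^ (p.2 + 1)) := by
  rw [gegenbauerSum, mul_sum]
  exact sum_congr rfl fun p _ => by ring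

end Expansion

lemma gegenbauerSum_add_two (n : ℕ) (a b : ℂ) :
    ((n : ℂ) + 2) * gegenbauerSum (n + 2) a b =
      (2 * (n : ℂ) + 5) / 2 * (a + b) * gegenbauerSum (n + 1) a b
        - ((n : ℂ) + 3) * (a * b) * gegenbauerSum n a b := by
  have h_boundary : ((n : ℂ) + 2) * γ (n + 2) = (2 * (n : ℂ) + 5) / 2 * γ (n + 1) := by
    have : (n : ℂ) + 1 + 1 ≠ 0 := by norm_cast
    rw [gegenbauerWeight_succ (n + 1)]
    push_cast
    field_simp
    ring
  have h_interior : ((n : ℂ) + 2) *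
      ∑ p ∈ antidiagonal n,
        ((γ (p.1 + 1) * γ (p.2 + 1) : ℝ) : ℂ) * (a ^ (p.1 + 1) * b ^ (p.2 + 1)) =
      (2 * (n : ℂ) + 5) / 2 *
        (∑ p ∈ antidiagonal n, ((γ p.1 * γ (p.2 + 1) : ℝ) : ℂ) * (a ^ (p.1 + 1) * b ^ (p.2 + 1)) +
          ∑ p ∈ antidiagonal n, ((γ (p.1 + 1) * γ p.2 : ℝ) : ℂ) * (a ^ (p.1 + 1) * b ^ (p.2 + 1)))
      - ((n : ℂ) + 3) *
        ∑ p ∈ antidiagonal n, ((γ p.1 * γ p.2 : ℝ) : ℂ) * (a ^ (p.1 + 1) * b ^ (p.2 + 1)) := by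
    rw [← sum_add_distrib, mul_sum, mul_sum, mul_sum, ← sum_sub_distrib]
    refine sum_congr rfl fun p hp => ?_
    rw [HasAntidiagonal.mem_antidiagonal] at hp
    subst hp
    have := congrArg ((↑) : ℝ → ℂ) (gegenbauerWeight_succ_mul_succ p.1 p.2)
    push_cast at this ⊢
    linear_combination this * (a ^ (p.1 + 1) * b ^ (p.2 + 1))
  linear_combination (↑n + 2) * gegenbauerSum_add_two_eq_add_sum n a b
    - (2 * ↑n + 5) / 2 * (mul_gegenbauerSum_succ_left n a b + mul_gegenbauerSum_succ_right n a b)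
    + (↑n + 3) * mul_mul_gegenbauerSum n a b + h_boundary * (a ^ (n + 2) + b ^ (n + 2))
    + h_interior

lemma gegenbauer_eq_gegenbauerSum {x : ℝ} {a b : ℂ} (hsum : a + b = 2 * x) (hprod : a * b = 1)
    (n : ℕ) : (gegenbauer n x : ℂ) = gegenbauerSum n a b := by
  induction n using Nat.twoStepInduction with
  | zero => simp [gegenbauer, gegenbauerSum, gegenbauerWeight]
  | one =>
    rw [gegenbauer, gegenbauerSum, Nat.sum_antidiagonal_succ]
    simp [gegenbauerWeight_succ]
    linear_combination (-3 / 2 : ℂ) * hsum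
  | more n ih₀ ih₁ =>
    have hn : (n : ℂ) + 2 ≠ 0 := by norm_cast
    rw [← mul_right_inj' hn, gegenbauerSum_add_two, ← ih₀, ← ih₁, hsum, hprod, gegenbauer]
    push_cast
    field_simp
    ring

lemma norm_gegenbauerSum_le (n : ℕ) {a b : ℂ} (ha : ‖a‖ = 1) (hb : ‖b‖ = 1) :
    ‖gegenbauerSum n a b‖ ≤ ∑ p ∈ antidiagonal n, γ p.1 * γ p.2 := by
  refine (norm_sum_le _ _).trans (sum_le_sum fun p _ => ?_)
  rw [norm_mul, norm_mul, norm_pow, norm_pow, ha, hb, one_pow, one_pow, mul_one, mul_one,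
    Complex.norm_real, Real.norm_of_nonneg]
  exact mul_nonneg (gegenbauerWeight_nonneg _) (gegenbauerWeight_nonneg _)

lemma gegenbauer_one_eq_sum (n : ℕ) :
    gegenbauer n 1 = ∑ p ∈ antidiagonal n, γ p.1 * γ p.2 := by
  have := gegenbauer_eq_gegenbauerSum (x := 1) (a := 1) (b := 1) (by norm_num) (by norm_num) n
  simp only [gegenbauerSum, one_pow, mul_one] at this
  exact_mod_cast this

lemma abs_gegenbauer_le {x : ℝ} (h₁ : -1 ≤ x) (h₂ : x ≤ 1) (n : ℕ) :
    |gegenbauer n x| ≤ gegenbauer n 1 := by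
  set θ := Real.arccos x
  have h_cos : (gegenbauer n x : ℂ) =
      gegenbauerSum n (Complex.exp (θ * Complex.I)) (Complex.exp (-θ * Complex.I)) := by
    refine gegenbauer_eq_gegenbauerSum ?_ ?_ n
    · rw [← Complex.two_cos, ← Complex.ofReal_cos, Real.cos_arccos h₁ h₂]
    · rw [← Complex.exp_add]; simp
  rw [gegenbauer_one_eq_sum, ← Real.norm_eq_abs, ← Complex.norm_real, h_cos]
  refine norm_gegenbauerSum_le n (Complex.norm_exp_ofReal_mul_I θ) ?_
  simpa using Complex.norm_exp_ofReal_mul_I (-θ)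

lemma gegenbauer_one (n : ℕ) : gegenbauer n 1 = ((n : ℝ) + 1) * ((n : ℝ) + 2) / 2 := by
  induction n using Nat.twoStepInduction with
  | zero => norm_num [gegenbauer]
  | one => norm_num [gegenbauer]
  | more n ih₀ ih₁ =>
    rw [gegenbauer, ih₀, ih₁]
    push_cast
    field_simp
    ring

lemma rkg2B_nonneg (j : ℕ) : 0 ≤ rkg2B j := by
  rcases j with _ | k
  · simp [rkg2B]
  · unfold rkg2B; push_cast; rw [add_sub_cancel_right]; positivity

lemma rkg2A_nonneg (j : ℕ) : 0 ≤ rkg2A j := by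
  rcases j with _ | k
  · simp [rkg2A, rkg2B]
  · unfold rkg2A rkg2B
    push_cast
    rw [sub_nonneg]
    field_simp
    nlinarith [sq_nonneg (k : ℝ)]

lemma rkg2A_add_rkg2B_mul (j : ℕ) :
    rkg2A j + rkg2B j * (((j : ℝ) + 1) * ((j : ℝ) + 2) / 2) = 1 := by
  unfold rkg2A; ring

theorem rkg2_absolute_stability_general (s : ℕ) (z : ℝ)
    (h₁ : -1 ≤ 1 + rkg2W s * z) (h₂ : 1 + rkg2W s * z ≤ 1) :
    |rkg2R s s z| ≤ 1 := by
  have hC := abs_gegenbauer_le h₁ h₂ s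
  rw [gegenbauer_one] at hC
  calc |rkg2R s s z|
      ≤ |rkg2A s| + |rkg2B s * gegenbauer s (1 + rkg2W s * z)| := abs_add_le _ _
    _ = rkg2A s + rkg2B s * |gegenbauer s (1 + rkg2W s * z)| := by
      rw [abs_of_nonneg (rkg2A_nonneg s), abs_mul, abs_of_nonneg (rkg2B_nonneg s)]
    _ ≤ rkg2A s + rkg2B s * (((s : ℝ) + 1) * ((s : ℝ) + 2) / 2) := by
      gcongr
      exact rkg2B_nonneg s
    _ = 1 := rkg2A_add_rkg2B_mul s

/-- For every integer `s ≥ 2` and every real `z` such that `−1 ≤ 1 + w_1·z ≤ 1`, the RKG2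
stability polynomial satisfies `|R_s(z)| ≤ 1`. -/
theorem rkg2_absolute_stability (s : ℕ) (hs : 2 ≤ s) (z : ℝ)
    (h₁ : -1 ≤ 1 + rkg2W s * z) (h₂ : 1 + rkg2W s * z ≤ 1) :
    |rkg2R s s z| ≤ 1 :=
  rkg2_absolute_stability_general s z h₁ h₂
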